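/- arXiv:2010.00540 — 3 statements merged into one kernel-verified Lean document; each statement's English description precedes it below -/
import Mathlib

section
/- Let v_1,...,v_n ∈ ℝ^m, r ∈ [0,1], and z_i = ∑_{j=2}^{n} |v_{j,i}| for each coordinate i. Let B^L be the bounding box of the parallelotope generated by (r v_1, v_2, ..., v_n), and let B^R be the translate by r v_1 of the bounding box of the parallelotope generated by ((1−r) v_1, v_2, ..., v_n). Then the volume of B^L ∩ B^R is at least ∏_{i=1}^{m} z_i, with equality when all coordinates v_{1,i} are nonnegative (or all nonpositive). -/
open MeasureTheory Set

/-- Parallelotope generated by vectors `v 0, …, v n` in `ℝ^m`. -/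
def parallelotope {n m : ℕ} (v : Fin n → Fin m → ℝ) : Set (Fin m → ℝ) :=
  {x | ∃ t : Fin n → ℝ, (∀ j, t j ∈ Set.Icc (0:ℝ) 1) ∧ x = ∑ j, t j • v j}

/-- Smallest axis-aligned bounding box of a set in `ℝ^m`. -/
def bbox {m : ℕ} (P : Set (Fin m → ℝ)) : Set (Fin m → ℝ) :=
  Set.univ.pi fun i => Set.Icc (sInf ((fun x => x i) '' P)) (sSup ((fun x => x i) '' P))

lemma proj_parallelotope {n m : ℕ} (w : Fin n → Fin m → ℝ) (i : Fin m) :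
    (fun x => x i) '' parallelotope w =
      {y : ℝ | ∃ t : Fin n → ℝ, (∀ j, t j ∈ Set.Icc (0:ℝ) 1) ∧ y = ∑ j, t j * w j i} := by
  ext y
  simp only [parallelotope, Set.mem_image, Set.mem_setOf_eq]
  constructor
  · rintro ⟨x, ⟨t, ht, rfl⟩, rfl⟩
    exact ⟨t, ht, by simp [Finset.sum_apply]⟩
  · rintro ⟨t, ht, rfl⟩
    exact ⟨∑ j, t j • w j, ⟨t, ht, rfl⟩, by simp [Finset.sum_apply]⟩

lemma isLeast_proj {n : ℕ} (c : Fin n → ℝ) :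
    IsLeast {y : ℝ | ∃ t : Fin n → ℝ, (∀ j, t j ∈ Set.Icc (0:ℝ) 1) ∧ y = ∑ j, t j * c j}
      (∑ j, min 0 (c j)) := by
  constructor
  · refine ⟨fun j => if c j < 0 then 1 else 0, fun j => by by_cases h : c j < 0 <;> simp [h], ?_⟩
    refine (Finset.sum_congr rfl fun j _ => ?_).symm
    rcases lt_or_ge (c j) 0 with h | h
    · simp [h, min_eq_right h.le]
    · simp [not_lt.2 h, min_eq_left h]
  · rintro y ⟨t, ht, rfl⟩
    refine Finset.sum_le_sum fun j _ => ?_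
    obtain ⟨h0, h1⟩ := ht j
    rcases le_total 0 (c j) with h | h
    · calc min 0 (c j) ≤ 0 := min_le_left _ _
        _ ≤ t j * c j := mul_nonneg h0 h
    · calc min 0 (c j) ≤ c j := min_le_right _ _
        _ ≤ t j * c j := by nlinarith

lemma isGreatest_proj {n : ℕ} (c : Fin n → ℝ) :
    IsGreatest {y : ℝ | ∃ t : Fin n → ℝ, (∀ j, t j ∈ Set.Icc (0:ℝ) 1) ∧ y = ∑ j, t j * c j}
      (∑ j, max 0 (c j)) := by
  constructor
  · refine ⟨fun j => if 0 < c j then 1 else 0, fun j => by by_cases h : 0 < c j <;> simp [h], ?_⟩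
    refine (Finset.sum_congr rfl fun j _ => ?_).symm
    rcases lt_or_ge 0 (c j) with h | h
    · simp [h, max_eq_right h.le]
    · simp [not_lt.2 h, max_eq_left h]
  · rintro y ⟨t, ht, rfl⟩
    refine Finset.sum_le_sum fun j _ => ?_
    obtain ⟨h0, h1⟩ := ht j
    rcases le_total 0 (c j) with h | h
    · calc t j * c j ≤ c j := by nlinarith
        _ ≤ max 0 (c j) := le_max_right _ _
    · calc t j * c j ≤ 0 := mul_nonpos_of_nonneg_of_nonpos h0 h
        _ ≤ max 0 (c j) := le_max_left _ _

lemma bbox_parallelotope {n m : ℕ} (w : Fin n → Fin m → ℝ) :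
    bbox (parallelotope w) =
      Set.univ.pi fun i => Set.Icc (∑ j, min 0 (w j i)) (∑ j, max 0 (w j i)) := by
  unfold bbox
  have h : (fun i => Set.Icc (sInf ((fun x => x i) '' parallelotope w))
      (sSup ((fun x => x i) '' parallelotope w))) =
      fun i => Set.Icc (∑ j, min 0 (w j i)) (∑ j, max 0 (w j i)) := by
    funext i
    rw [proj_parallelotope, (isLeast_proj _).csInf_eq, (isGreatest_proj _).csSup_eq]
  rw [h]

lemma image_add_pi {m : ℕ} (l u c : Fin m → ℝ) :
    (fun x => x + c) '' (Set.univ.pi fun i => Set.Icc (l i) (u i)) =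
      Set.univ.pi fun i => Set.Icc (l i + c i) (u i + c i) := by
  ext x
  simp only [Set.mem_image, Set.mem_pi, Set.mem_univ, forall_true_left, Set.mem_Icc]
  constructor
  · rintro ⟨y, hy, rfl⟩ i
    obtain ⟨h1, h2⟩ := hy i
    constructor <;> simp [Pi.add_apply] <;> linarith
  · intro h
    refine ⟨x - c, fun i => ?_, by simp⟩
    obtain ⟨h1, h2⟩ := h i
    constructor <;> simp [Pi.sub_apply] <;> linarith

lemma key_max (a r mi : ℝ) (h0 : 0 ≤ r) (h1 : r ≤ 1) :
    max (min 0 (r * a) + mi) (min 0 ((1 - r) * a) + mi + r * a) = r * a + mi := by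
  rcases le_total 0 a with h | h <;> simp [min_def, max_def] <;> split_ifs <;> nlinarith

lemma key_min (a r Pi : ℝ) (h0 : 0 ≤ r) (h1 : r ≤ 1) :
    min (max 0 (r * a) + Pi) (max 0 ((1 - r) * a) + Pi + r * a) = r * a + Pi := by
  rcases le_total 0 a with h | h <;> simp [min_def, max_def] <;> split_ifs <;> nlinarith

theorem volume_inter_of_split_boxes {n m : ℕ} (v : Fin (n + 1) → Fin m → ℝ) (r : ℝ)
    (hr : r ∈ Set.Icc (0:ℝ) 1) :
    let BL := bbox (parallelotope (Function.update v 0 (r • v 0)))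
    let BR := (fun x => x + r • v 0) ''
      bbox (parallelotope (Function.update v 0 ((1 - r) • v 0)))
    ENNReal.ofReal (∏ i, ∑ j ∈ Finset.univ.erase 0, |v j i|) ≤ volume (BL ∩ BR) ∧
      (((∀ i, 0 ≤ v 0 i) ∨ (∀ i, v 0 i ≤ 0)) →
        volume (BL ∩ BR) =
          ENNReal.ofReal (∏ i, ∑ j ∈ Finset.univ.erase 0, |v j i|)) := by
  intro BL BR
  obtain ⟨hr0, hr1⟩ := hr
  have hsplit : ∀ (c : ℝ) (f : ℝ → ℝ) (i : Fin m),
      (∑ j, f (Function.update v 0 (c • v 0) j i)) =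
        f (c * v 0 i) + ∑ j ∈ Finset.univ.erase 0, f (v j i) := by
    intro c f i
    rw [← Finset.add_sum_erase _ _ (Finset.mem_univ 0), Function.update_self,
      Pi.smul_apply, smul_eq_mul]
    congr 1
    exact Finset.sum_congr rfl fun j hj => by
      rw [Function.update_of_ne (Finset.ne_of_mem_erase hj)]
  have hBL : BL = Set.univ.pi fun i =>
      Set.Icc (min 0 (r * v 0 i) + ∑ j ∈ Finset.univ.erase 0, min 0 (v j i))
        (max 0 (r * v 0 i) + ∑ j ∈ Finset.univ.erase 0, max 0 (v j i)) := by
    show bbox _ = _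
    rw [bbox_parallelotope]
    refine congrArg (Set.pi Set.univ) (funext fun i => ?_)
    rw [hsplit r (fun x => min 0 x) i, hsplit r (fun x => max 0 x) i]
  have hBR : BR = Set.univ.pi fun i =>
      Set.Icc ((min 0 ((1 - r) * v 0 i) + ∑ j ∈ Finset.univ.erase 0, min 0 (v j i)) + r * v 0 i)
        ((max 0 ((1 - r) * v 0 i) + ∑ j ∈ Finset.univ.erase 0, max 0 (v j i)) + r * v 0 i) := by
    show (fun x => x + r • v 0) '' bbox _ = _
    rw [bbox_parallelotope, image_add_pi]
    refine congrArg (Set.pi Set.univ) (funext fun i => ?_)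
    rw [hsplit (1 - r) (fun x => min 0 x) i, hsplit (1 - r) (fun x => max 0 x) i]
    simp [Pi.smul_apply, smul_eq_mul]
  have hBLBR : BL ∩ BR = Set.univ.pi fun i =>
      Set.Icc (r * v 0 i + ∑ j ∈ Finset.univ.erase 0, min 0 (v j i))
        (r * v 0 i + ∑ j ∈ Finset.univ.erase 0, max 0 (v j i)) := by
    rw [hBL, hBR, ← Set.pi_inter_distrib]
    refine congrArg (Set.pi Set.univ) (funext fun i => ?_)
    rw [Set.Icc_inter_Icc]
    rw [show ∀ a b : ℝ, a ⊔ b = max a b from fun _ _ => rfl,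
        show ∀ a b : ℝ, a ⊓ b = min a b from fun _ _ => rfl]
    rw [key_max _ _ _ hr0 hr1, key_min _ _ _ hr0 hr1]
  have hvol : volume (BL ∩ BR) =
      ENNReal.ofReal (∏ i, ∑ j ∈ Finset.univ.erase 0, |v j i|) := by
    rw [hBLBR, volume_pi_pi,
      ENNReal.ofReal_prod_of_nonneg fun i _ => Finset.sum_nonneg fun j _ => abs_nonneg _]
    refine Finset.prod_congr rfl fun i _ => ?_
    rw [Real.volume_Icc]
    congr 1
    rw [add_sub_add_left_eq_sub, ← Finset.sum_sub_distrib]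
    exact Finset.sum_congr rfl fun j _ => by rw [max_sub_min_eq_abs, sub_zero]
  exact ⟨le_of_eq hvol.symm, fun _ => hvol⟩
end

section
/- For nonnegative reals a_1,...,a_m and z_1,...,z_m and r ∈ [0,1], define V_red(r) = ∏_{i=1}^{m}(a_i + z_i) − ∏_{i=1}^{m}(r a_i + z_i) − ∏_{i=1}^{m}((1−r) a_i + z_i) + ∏_{i=1}^{m} z_i. Then V_red(r) ≥ 0. -/
theorem volume_reduction_nonneg {m : ℕ} (a z : Fin m → ℝ) (ha : ∀ i, 0 ≤ a i)
    (hz : ∀ i, 0 ≤ z i) (r : ℝ) (hr : r ∈ Set.Icc (0:ℝ) 1) :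
    0 ≤ ∏ i, (a i + z i) - ∏ i, (r * a i + z i) - ∏ i, ((1 - r) * a i + z i)
        + ∏ i, z i := by
  obtain ⟨hr0, hr1⟩ := hr
  have key : ∀ (x : ℝ), ∏ i, (x * a i + z i) =
      ∑ t ∈ (Finset.univ : Finset (Fin m)).powerset,
        x ^ t.card * ((∏ i ∈ t, a i) * ∏ i ∈ Finset.univ \ t, z i) := by
    intro x
    rw [Finset.prod_add]
    refine Finset.sum_congr rfl fun t _ => ?_
    rw [Finset.prod_mul_distrib, Finset.prod_const, mul_assoc]
  have h1 : ∏ i, (a i + z i) =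
      ∑ t ∈ (Finset.univ : Finset (Fin m)).powerset,
        (1:ℝ) ^ t.card * ((∏ i ∈ t, a i) * ∏ i ∈ Finset.univ \ t, z i) := by
    rw [← key 1]; simp
  have h0 : ∏ i, z i =
      ∑ t ∈ (Finset.univ : Finset (Fin m)).powerset,
        (0:ℝ) ^ t.card * ((∏ i ∈ t, a i) * ∏ i ∈ Finset.univ \ t, z i) := by
    rw [← key 0]; simp
  rw [h1, h0, key r, key (1 - r), ← Finset.sum_sub_distrib, ← Finset.sum_sub_distrib,
    ← Finset.sum_add_distrib]
  apply Finset.sum_nonneg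
  intro t _
  have hP : 0 ≤ (∏ i ∈ t, a i) * ∏ i ∈ Finset.univ \ t, z i :=
    mul_nonneg (Finset.prod_nonneg fun i _ => ha i) (Finset.prod_nonneg fun i _ => hz i)
  have hc : r ^ t.card + (1 - r) ^ t.card ≤ (1:ℝ) ^ t.card + (0:ℝ) ^ t.card := by
    cases t.card with
    | zero => norm_num
    | succ k =>
        have h1' : r ^ (k + 1) ≤ r := by
          calc r ^ (k + 1) ≤ r ^ 1 := pow_le_pow_of_le_one hr0 hr1 (by omega)
          _ = r := pow_one r
        have h2' : (1 - r) ^ (k + 1) ≤ 1 - r := by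
          calc (1 - r) ^ (k + 1) ≤ (1 - r) ^ 1 :=
            pow_le_pow_of_le_one (by linarith) (by linarith) (by omega)
          _ = 1 - r := pow_one _
        simp only [one_pow, zero_pow (Nat.succ_ne_zero k)]
        linarith
  nlinarith [mul_le_mul_of_nonneg_right hc hP]
end

section
/- Let v_1,...,v_n ∈ ℝ^m and r ∈ [0,1]. Every vertex of the union of the translated bounding boxes B^L ∪ B^R (from splitting v_1 by ratio r) lies inside the bounding box B of the unsplit parallelotope; consequently Vol(B^L ∪ B^R) ≤ Vol(B). -/
/-!
Both pieces are sub-parallelotopes of `parallelotope v`: the left one is the image of the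
coefficient box with `t 0` rescaled into `[0, r]`, the right one the image with `t 0` moved into
`[r, 1]`. Taking bounding boxes is monotone for inclusion and commutes with translation, so both
boxes lie in `B`, and the volume bound is monotonicity of the measure.
-/

open MeasureTheory Set

section Parallelotope

variable {n m : ℕ} (v : Fin n → Fin m → ℝ)

lemma parallelotope_eq_image :
    parallelotope v = (fun t : Fin n → ℝ => ∑ j, t j • v j) '' Icc 0 1 := by
  ext x
  simp only [parallelotope, mem_ofPred_eq, mem_image, mem_Icc, Pi.le_def, Pi.zero_apply,
    Pi.one_apply, forall_and, eq_comm]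

lemma isBounded_parallelotope : Bornology.IsBounded (parallelotope v) := by
  rw [parallelotope_eq_image]
  exact (isCompact_Icc.image (by fun_prop)).isBounded

lemma parallelotope_nonempty : (parallelotope v).Nonempty :=
  ⟨0, 0, fun _ => ⟨le_rfl, zero_le_one⟩, by simp⟩

lemma image_add_smul_parallelotope_update_subset (k : Fin n) {a s : ℝ} (ha : 0 ≤ a)
    (hs : 0 ≤ s) (has : a + s ≤ 1) :
    (fun x => x + a • v k) '' parallelotope (Function.update v k (s • v k)) ⊆
      parallelotope v := by
  rintro _ ⟨_, ⟨t, ht, rfl⟩, rfl⟩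
  refine ⟨Function.update t k (a + s * t k), fun j => ?_, ?_⟩
  · rcases eq_or_ne j k with rfl | hj
    · rw [Function.update_self]
      obtain ⟨h0, h1⟩ := ht j
      constructor <;> nlinarith
    · simpa [Function.update_of_ne hj] using ht j
  · rw [← Finset.add_sum_erase _ _ (Finset.mem_univ k),
      ← Finset.add_sum_erase _ _ (Finset.mem_univ k)]
    have hrest : ∀ j ∈ Finset.univ.erase k,
        t j • Function.update v k (s • v k) j = Function.update t k (a + s * t k) j • v j :=
      fun j hj => by simp [Function.update_of_ne (Finset.ne_of_mem_erase hj)]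
    rw [Finset.sum_congr rfl hrest]
    simp only [Function.update_self, smul_smul, add_smul]
    rw [mul_comm]
    abel

end Parallelotope

section BoundingBox

open Bornology

variable {m : ℕ}

lemma bbox_mono {P Q : Set (Fin m → ℝ)} (hP : P.Nonempty) (hQ : IsBounded Q) (hPQ : P ⊆ Q) :
    bbox P ⊆ bbox Q := by
  intro x hx i _
  have hPQ_i := image_mono (f := fun y : Fin m → ℝ => y i) hPQ
  exact ⟨(csInf_le_csInf ((Function.monotone_eval i).map_bddBelow hQ.bddBelow) (hP.image _)
      hPQ_i).trans (hx i trivial).1,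
    (hx i trivial).2.trans
      (csSup_le_csSup ((Function.monotone_eval i).map_bddAbove hQ.bddAbove) (hP.image _) hPQ_i)⟩

lemma bbox_image_add_const {P : Set (Fin m → ℝ)} (hP : P.Nonempty) (hPb : IsBounded P)
    (c : Fin m → ℝ) : bbox ((· + c) '' P) = (· + c) '' bbox P := by
  have hcoord (i : Fin m) :
      (fun x => x i) '' ((· + c) '' P) = OrderIso.addRight (c i) '' ((fun x => x i) '' P) := by
    simp only [image_image]; rfl
  have hne (i : Fin m) := hP.image (fun x => x i)
  have hInf (i : Fin m) : sInf ((fun x => x i) '' ((· + c) '' P)) =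
      sInf ((fun x => x i) '' P) + c i := by
    rw [hcoord, ← OrderIso.map_csInf' _ (hne i)
      ((Function.monotone_eval i).map_bddBelow hPb.bddBelow)]
    rfl
  have hSup (i : Fin m) : sSup ((fun x => x i) '' ((· + c) '' P)) =
      sSup ((fun x => x i) '' P) + c i := by
    rw [hcoord, ← OrderIso.map_csSup' _ (hne i)
      ((Function.monotone_eval i).map_bddAbove hPb.bddAbove)]
    rfl
  ext x
  simp only [bbox, mem_pi, mem_univ, true_imp_iff, hInf, hSup]
  rw [image_add_right]
  simp only [mem_preimage, ← sub_eq_add_neg, mem_pi, mem_univ, true_imp_iff, mem_Icc,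
    Pi.sub_apply, le_sub_iff_add_le, sub_le_iff_le_add]

end BoundingBox

theorem split_boxes_subset_and_volume_le {n m : ℕ} (v : Fin (n + 1) → Fin m → ℝ)
    (r : ℝ) (hr : r ∈ Set.Icc (0:ℝ) 1) :
    let B := bbox (parallelotope v)
    let BL := bbox (parallelotope (Function.update v 0 (r • v 0)))
    let BR := (fun x => x + r • v 0) ''
      bbox (parallelotope (Function.update v 0 ((1 - r) • v 0)))
    BL ∪ BR ⊆ B ∧ volume (BL ∪ BR) ≤ volume B := by
  intro B BL BR
  have hL : BL ⊆ B := by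
    refine bbox_mono (parallelotope_nonempty _) (isBounded_parallelotope v) ?_
    simpa using image_add_smul_parallelotope_update_subset v 0 le_rfl hr.1 (by simp [hr.2])
  have hR : BR ⊆ B := by
    rw [show BR = _ from (bbox_image_add_const (parallelotope_nonempty _)
      (isBounded_parallelotope _) _).symm]
    exact bbox_mono ((parallelotope_nonempty _).image _) (isBounded_parallelotope v)
      (image_add_smul_parallelotope_update_subset v 0 hr.1 (sub_nonneg.2 hr.2) (by simp))
  exact ⟨union_subset hL hR, measure_mono (union_subset hL hR)⟩
end
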